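/- arXiv:1510.00033 — 2 statements merged into one kernel-verified Lean document; each statement's English description precedes it below -/
import Mathlib

section
/- For integers n ≥ k ≥ 1, the sum over subsets S ⊆ [n] containing n with |S| > k of C(|S|−2, k−1), plus the sum over subsets S ⊆ [n] containing n with |S| ≥ k of C(|S|−2, k−2), equals C(n−1, k−1)·2^{n−k}. -/
/-- The binomial coefficient with the paper's conventions for possibly negative
arguments: for `b ≥ 0` it is the usual (ring-valued) binomial coefficient, while for
`b < 0` it is `1` if `a = b` and `0` otherwise. -/
noncomputable def pCh (a b : ℤ) : ℤ :=
  if b < 0 then (if a = b then 1 else 0) else Ring.choose a b.toNat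

/-!
Deleting `n` from `S` identifies the subsets of `[n]` containing `n` with the subsets `T` of
`[n-1]`, with `|S| = |T| + 1`. By Pascal's rule the two summands for `S` add up to
`C(|T|, k-1)`; at `|S| = k = 1` this uses the convention `pCh (-1) (-1) = 1`. Finally
`∑_{T ⊆ [m]} C(|T|, r) = C(m, r) 2^(m-r)`, counting the pairs `U ⊆ T ⊆ [m]` with `|U| = r`
by `U` first.
-/

open Finset

lemma pCh_natCast (a b : ℕ) : pCh a b = a.choose b := by
  simp [pCh, Ring.choose_natCast]

lemma ite_pCh_add_ite_pCh_eq_choose {c k : ℕ} (hc : 1 ≤ c) (hk : 1 ≤ k) :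
    ((if k < c then pCh ((c : ℤ) - 2) ((k : ℤ) - 1) else 0) +
      if k ≤ c then pCh ((c : ℤ) - 2) ((k : ℤ) - 2) else 0) = ((c - 1).choose (k - 1) : ℤ) := by
  obtain ⟨j, rfl⟩ := Nat.exists_eq_add_of_le' hc
  obtain ⟨r, rfl⟩ := Nat.exists_eq_add_of_le' hk
  rcases j with _ | i
  · rcases r with _ | s <;> simp [pCh]
  rcases r with _ | s
  · have : (i : ℤ) + 1 + 1 - 2 ≠ -1 := by omega
    simp [pCh, this]
  · have h1 : ((i + 1 + 1 : ℕ) : ℤ) - 2 = i := by push_cast; ring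
    have h2 : ((s + 1 + 1 : ℕ) : ℤ) - 1 = (s + 1 : ℕ) := by push_cast; ring
    have h3 : ((s + 1 + 1 : ℕ) : ℤ) - 2 = s := by push_cast; ring
    rw [h1, h2, h3, pCh_natCast, pCh_natCast, Nat.add_sub_cancel, Nat.add_sub_cancel,
      Nat.choose_succ_succ']
    split_ifs <;> simp_all [Nat.choose_eq_zero_of_lt]; omega

lemma sum_powerset_card_choose {α : Type*} [DecidableEq α] (s : Finset α) (r : ℕ) :
    ∑ t ∈ s.powerset, (#t).choose r = (#s).choose r * 2 ^ (#s - r) := by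
  calc ∑ t ∈ s.powerset, (#t).choose r
      = ∑ t ∈ s.powerset, #(bipartiteAbove (· ⊇ ·) (s.powersetCard r) t) := by
        refine sum_congr rfl fun t ht => ?_
        rw [← card_powersetCard]
        congr 1
        ext u
        simp only [bipartiteAbove, mem_filter, mem_powersetCard]
        exact ⟨fun ⟨hut, hr⟩ => ⟨⟨hut.trans (mem_powerset.1 ht), hr⟩, hut⟩,
          fun ⟨⟨_, hr⟩, hut⟩ => ⟨hut, hr⟩⟩
    _ = ∑ u ∈ s.powersetCard r, #(bipartiteBelow (· ⊇ ·) s.powerset u) :=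
        sum_card_bipartiteAbove_eq_sum_card_bipartiteBelow _
    _ = ∑ u ∈ s.powersetCard r, 2 ^ (#s - r) := by
        refine sum_congr rfl fun u hu => ?_
        rw [mem_powersetCard] at hu
        rw [← hu.2, ← card_Icc_finset hu.1]
        congr 1
        ext t
        simp [bipartiteBelow, and_comm]
    _ = (#s).choose r * 2 ^ (#s - r) := by rw [sum_const, card_powersetCard, smul_eq_mul]

lemma sum_filter_mem_powerset_insert {α M : Type*} [DecidableEq α] [AddCommMonoid M] {a : α}
    {s : Finset α} (ha : a ∉ s) (P : ℕ → Prop) [DecidablePred P] (f : ℕ → M) :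
    ∑ t ∈ (insert a s).powerset.filter (fun t => a ∈ t ∧ P #t), f #t =
      ∑ t ∈ s.powerset, if P (#t + 1) then f (#t + 1) else 0 := by
  have not_mem {t} (ht : t ∈ s.powerset) : a ∉ t := fun h => ha (mem_powerset.1 ht h)
  rw [sum_filter, sum_powerset_insert ha, sum_eq_zero fun t ht => if_neg fun h => not_mem ht h.1,
    zero_add]
  refine sum_congr rfl fun t ht => ?_
  simp only [mem_insert_self, true_and, card_insert_of_notMem (not_mem ht)]

/-- For `n ≥ k ≥ 1`, the sum over subsets `S ⊆ [n]` with `n ∈ S` and `|S| > k` of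
`C(|S|−2, k−1)`, plus the sum over subsets `S ⊆ [n]` with `n ∈ S` and `|S| ≥ k` of
`C(|S|−2, k−2)`, equals `C(n−1, k−1)·2^{n−k}`. -/
theorem sum_over_subsets_containing_n (n k : ℕ) (hk : 1 ≤ k) (hkn : k ≤ n) :
    (∑ S ∈ (Finset.Icc 1 n).powerset.filter (fun S => n ∈ S ∧ k < S.card),
        pCh ((S.card : ℤ) - 2) ((k : ℤ) - 1)) +
    (∑ S ∈ (Finset.Icc 1 n).powerset.filter (fun S => n ∈ S ∧ k ≤ S.card),
        pCh ((S.card : ℤ) - 2) ((k : ℤ) - 2)) =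
    ((n - 1).choose (k - 1) : ℤ) * 2 ^ (n - k) := by
  have hn : 1 ≤ n := hk.trans hkn
  have hIcc : Icc 1 n = insert n (Icc 1 (n - 1)) := by
    ext; simp only [mem_Icc, mem_insert]; omega
  have hnotMem : n ∉ Icc 1 (n - 1) := by simp only [mem_Icc]; omega
  rw [hIcc,
    sum_filter_mem_powerset_insert hnotMem (k < ·) fun c : ℕ => pCh ((c : ℤ) - 2) ((k : ℤ) - 1),
    sum_filter_mem_powerset_insert hnotMem (k ≤ ·) fun c : ℕ => pCh ((c : ℤ) - 2) ((k : ℤ) - 2),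
    ← sum_add_distrib]
  simp only [ite_pCh_add_ite_pCh_eq_choose (Nat.le_add_left 1 _) hk, Nat.add_sub_cancel]
  have hcard := sum_powerset_card_choose (Icc 1 (n - 1)) (k - 1)
  rw [Nat.card_Icc, Nat.add_sub_cancel, show n - 1 - (k - 1) = n - k by omega] at hcard
  exact_mod_cast hcard
end

section
/- For every integer n ≥ 2, the number of spanning trees of the complete graph K_n is n^{n−2} (the case d = 1 of Kalai's formula Σ_{Υ ∈ 𝒯_d} |H̃_{d−1}(Υ;ℤ)|² = n^{C(n−2,d)} for the d-skeleton of the simplex on n vertices). -/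
namespace Cayley
open SimpleGraph

variable {n : ℕ}

/-- `f` is a parent function rooted at `r`. -/
def IsRooted (f : Fin n → Fin n) (r : Fin n) : Prop :=
  f r = r ∧ ∀ v, ∃ k, f^[k] v = r

lemma iterate_fixed_of_ge {α : Type*} {f : α → α} {r : α} (hr : f r = r) {v : α} {k : ℕ}
    (hk : f^[k] v = r) {j : ℕ} (hj : k ≤ j) : f^[j] v = r := by
  obtain ⟨m, rfl⟩ := Nat.exists_eq_add_of_le hj
  rw [Nat.add_comm, Function.iterate_add_apply, hk]
  exact Function.iterate_fixed hr m

/-- No periodic point other than the root can converge to the root. -/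
lemma no_return {α : Type*} {f : α → α} {r v : α} (hr : f r = r) {k : ℕ} (hk : f^[k] v = r)
    (hv : v ≠ r) {p : ℕ} (hp : 0 < p) (hpv : f^[p] v = v) : False := by
  have h1 : f^[p * k] v = v := by
    rw [Function.iterate_mul]; exact Function.iterate_fixed hpv k
  have h2 : k ≤ p * k := Nat.le_mul_of_pos_left k hp
  exact hv (h1 ▸ iterate_fixed_of_ge hr hk h2)

/-- The graph determined by a parent function: `u ~ v` iff one is the parent of the other. -/
def graphOf (f : Fin n → Fin n) : SimpleGraph (Fin n) where
  Adj u v := u ≠ v ∧ (f u = v ∨ f v = u)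
  symm := by constructor; intro u v ⟨h1, h2⟩; exact ⟨h1.symm, h2.symm⟩
  loopless := by constructor; intro u ⟨h1, _⟩; exact h1 rfl

lemma graphOf_adj {f : Fin n → Fin n} {u v : Fin n} :
    (graphOf f).Adj u v ↔ u ≠ v ∧ (f u = v ∨ f v = u) := Iff.rfl

lemma fix_ne {f : Fin n → Fin n} {r : Fin n} (hf : IsRooted f r) {v : Fin n} (hv : v ≠ r) :
    f v ≠ v := by
  intro h
  obtain ⟨k, hk⟩ := hf.2 v
  exact no_return hf.1 hk hv Nat.one_pos (by simpa using h)

lemma adj_parent {f : Fin n → Fin n} {r : Fin n} (hf : IsRooted f r) {v : Fin n} (hv : v ≠ r) :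
    (graphOf f).Adj v (f v) := ⟨(fix_ne hf hv).symm, Or.inl rfl⟩

lemma reachable_root {f : Fin n → Fin n} {r : Fin n} (hf : IsRooted f r) (v : Fin n) :
    (graphOf f).Reachable v r := by
  obtain ⟨k, hk⟩ := hf.2 v
  induction k generalizing v with
  | zero => simpa using hk ▸ Reachable.refl v
  | succ k ih =>
    by_cases hv : v = r
    · subst hv; exact Reachable.refl v
    · exact ((adj_parent hf hv).reachable).trans (ih (f v) (by rwa [Function.iterate_succ_apply] at hk))

/-- Membership in a set closed under adjacency propagates along reachability. -/
lemma mem_of_reachable {V : Type*} {G : SimpleGraph V} {A : Set V}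
    (hA : ∀ x ∈ A, ∀ y, G.Adj x y → y ∈ A) {u v : V} (h : G.Reachable u v) (hu : u ∈ A) :
    v ∈ A := by
  obtain ⟨w⟩ := h
  induction w with
  | nil => exact hu
  | cons h p ih => exact ih (hA _ hu _ h)

lemma isTree_graphOf {f : Fin n → Fin n} {r : Fin n} (hf : IsRooted f r) :
    (graphOf f).IsTree := by
  constructor
  · have : Nonempty (Fin n) := ⟨r⟩
    exact ⟨fun u v => (reachable_root hf u).trans (reachable_root hf v).symm⟩
  · rw [isAcyclic_iff_forall_adj_isBridge]
    intro u v huv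
    -- WLOG `f u = v`
    have key : ∀ u v : Fin n, u ≠ v → f u = v → (graphOf f).IsBridge s(u, v) := by
      intro u v huv hfu
      have hur : u ≠ r := by rintro rfl; exact huv (hfu ▸ hf.1).symm
      rw [isBridge_iff]
      intro hreach
      set A : Set (Fin n) := {w | ∃ k, f^[k] w = u} with hA
      have hclosed : ∀ x ∈ A, ∀ y, ((graphOf f) \ fromEdgeSet {s(u, v)}).Adj x y → y ∈ A := by
        rintro x ⟨k, hk⟩ y hxy
        obtain ⟨⟨hne, hor⟩, hnot⟩ := hxy
        rcases hor with h1 | h1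
        · -- f x = y
          rcases eq_or_ne x u with rfl | hxu
          · exact absurd (by simp [hfu ▸ h1, hne]) hnot
          · rcases Nat.eq_zero_or_pos k with rfl | hkpos
            · exact absurd hk hxu
            · obtain ⟨k', rfl⟩ := Nat.exists_eq_succ_of_ne_zero hkpos.ne'
              exact ⟨k', by rw [← h1]; rw [Function.iterate_succ_apply] at hk; exact hk⟩
        · exact ⟨k + 1, by rw [Function.iterate_succ_apply, h1]; exact hk⟩
      have hvA : v ∈ A := mem_of_reachable hclosed hreach ⟨0, rfl⟩
      obtain ⟨k, hk⟩ := hvA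
      obtain ⟨m, hm⟩ := hf.2 u
      exact no_return hf.1 hm hur (Nat.succ_pos k)
        (by rw [Function.iterate_succ_apply, hfu]; exact hk)
    rcases huv.2 with h | h
    · exact key u v huv.1 h
    · have := key v u (Ne.symm huv.1) h
      rwa [Sym2.eq_swap] at this
variable {n : ℕ}

/-- The unique path between two vertices of a tree. -/
noncomputable def thePath {G : SimpleGraph (Fin n)} (hG : G.IsTree) (v w : Fin n) : G.Walk v w :=
  (hG.existsUnique_path v w).exists.choose

lemma thePath_isPath {G : SimpleGraph (Fin n)} (hG : G.IsTree) (v w : Fin n) :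
    (thePath hG v w).IsPath := (hG.existsUnique_path v w).exists.choose_spec

lemma thePath_unique {G : SimpleGraph (Fin n)} (hG : G.IsTree) {v w : Fin n}
    (W : G.Walk v w) (hW : W.IsPath) : thePath hG v w = W :=
  ((hG.existsUnique_path v w).unique (thePath_isPath hG v w) hW)

variable [NeZero n]

/-- The parent function of a tree, rooted at `0`. -/
noncomputable def parentFun {G : SimpleGraph (Fin n)} (hG : G.IsTree) (v : Fin n) : Fin n :=
  if h : v = 0 then 0 else (thePath hG v 0).getVert 1

lemma parentFun_root {G : SimpleGraph (Fin n)} (hG : G.IsTree) : parentFun hG 0 = 0 := by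
  simp [parentFun]

lemma thePath_not_nil {G : SimpleGraph (Fin n)} (hG : G.IsTree) {v : Fin n} (hv : v ≠ 0) :
    ¬ (thePath hG v 0).Nil := Walk.not_nil_of_ne hv

lemma adj_parentFun {G : SimpleGraph (Fin n)} (hG : G.IsTree) {v : Fin n} (hv : v ≠ 0) :
    G.Adj v (parentFun hG v) := by
  rw [parentFun, dif_neg hv]
  exact Walk.adj_snd (thePath_not_nil hG hv)

lemma thePath_parentFun {G : SimpleGraph (Fin n)} (hG : G.IsTree) {v : Fin n} (hv : v ≠ 0) :
    thePath hG (parentFun hG v) 0 = ((thePath hG v 0).tail).copy (by rw [parentFun, dif_neg hv]) rfl := by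
  apply thePath_unique
  rw [Walk.isPath_copy]
  exact (thePath_isPath hG v 0).tail

lemma length_thePath_parentFun {G : SimpleGraph (Fin n)} (hG : G.IsTree) {v : Fin n} (hv : v ≠ 0) :
    (thePath hG (parentFun hG v) 0).length + 1 = (thePath hG v 0).length := by
  rw [thePath_parentFun hG hv, Walk.length_copy]
  exact Walk.length_tail_add_one (thePath_not_nil hG hv)

lemma parentFun_isRooted {G : SimpleGraph (Fin n)} (hG : G.IsTree) :
    IsRooted (parentFun hG) 0 := by
  refine ⟨parentFun_root hG, ?_⟩
  intro v
  generalize hL : (thePath hG v 0).length = L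
  induction L using Nat.strong_induction_on generalizing v with
  | _ L ih =>
    by_cases hv : v = 0
    · exact ⟨0, hv⟩
    · have hlen := length_thePath_parentFun hG hv
      obtain ⟨k, hk⟩ := ih (thePath hG (parentFun hG v) 0).length (by omega) (parentFun hG v) rfl
      exact ⟨k + 1, by rwa [Function.iterate_succ_apply]⟩

variable {n : ℕ} [NeZero n]

/-- The canonical walk from `v` to the root along iterates of `f`. -/
def walkAux (f : Fin n → Fin n) {r : Fin n} (hf : IsRooted f r) :
    (k : ℕ) → (v : Fin n) → f^[k] v = r → (graphOf f).Walk v r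
  | 0, _, h => Walk.nil.copy rfl h
  | k+1, v, h =>
    if hv : v = r then Walk.nil.copy rfl hv
    else Walk.cons (adj_parent hf hv)
      (walkAux f hf k (f v) (by rwa [Function.iterate_succ_apply] at h))

lemma walkAux_support {f : Fin n → Fin n} {r : Fin n} (hf : IsRooted f r) :
    ∀ (k : ℕ) (v : Fin n) (h : f^[k] v = r),
      ∀ w ∈ (walkAux f hf k v h).support, ∃ j, f^[j] v = w := by
  intro k
  induction k with
  | zero => intro v h w hw; rw [walkAux, Walk.support_copy (Walk.nil : (graphOf f).Walk v v) rfl h] at hw; simp at hw; exact ⟨0, hw.symm⟩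
  | succ k ih =>
    intro v h w hw
    rw [walkAux] at hw
    split_ifs at hw with hv
    · simp at hw; exact ⟨0, hw.symm⟩
    · rw [Walk.support_cons] at hw
      rcases List.mem_cons.mp hw with rfl | hw
      · exact ⟨0, rfl⟩
      · obtain ⟨j, hj⟩ := ih (f v) (by rwa [Function.iterate_succ_apply] at h) w hw
        exact ⟨j + 1, by rwa [Function.iterate_succ_apply]⟩

lemma walkAux_isPath {f : Fin n → Fin n} {r : Fin n} (hf : IsRooted f r) :
    ∀ (k : ℕ) (v : Fin n) (h : f^[k] v = r), (walkAux f hf k v h).IsPath := by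
  intro k
  induction k with
  | zero => intro v h; rw [walkAux]; exact (Walk.isPath_copy _ _ _).mpr Walk.IsPath.nil
  | succ k ih =>
    intro v h
    rw [walkAux]
    split_ifs with hv
    · rw [Walk.isPath_copy]; exact Walk.IsPath.nil
    · rw [Walk.cons_isPath_iff]
      refine ⟨ih _ _, fun hmem => ?_⟩
      obtain ⟨j, hj⟩ := walkAux_support hf k (f v) _ v hmem
      exact no_return hf.1 h hv (Nat.succ_pos j)
        (by rwa [Function.iterate_succ_apply])

lemma walkAux_getVert_one {f : Fin n → Fin n} {r : Fin n} (hf : IsRooted f r)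
    (k : ℕ) (v : Fin n) (h : f^[k+1] v = r) (hv : v ≠ r) :
    (walkAux f hf (k+1) v h).getVert 1 = f v := by
  rw [walkAux, dif_neg hv]
  rw [Walk.getVert_cons _ _ (by norm_num)]
  exact Walk.getVert_zero _

lemma parentFun_graphOf {f : Fin n → Fin n} (hf : IsRooted f 0) :
    parentFun (isTree_graphOf hf) = f := by
  funext v
  by_cases hv : v = 0
  · rw [hv, parentFun_root, hf.1]
  · obtain ⟨k, hk⟩ := hf.2 v
    have hk' : f^[k+1] v = 0 := iterate_fixed_of_ge hf.1 hk (Nat.le_succ k)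
    have hpath := thePath_unique (isTree_graphOf hf) (walkAux f hf (k+1) v hk')
      (walkAux_isPath hf (k+1) v hk')
    rw [parentFun, dif_neg hv, hpath]
    exact walkAux_getVert_one hf k v hk' hv
lemma parent_or_parent {G : SimpleGraph (Fin n)} (hG : G.IsTree) {u v : Fin n}
    (huv : G.Adj u v) : parentFun hG u = v ∨ parentFun hG v = u := by
  set Pu := thePath hG u 0 with hPu
  by_cases hv : v ∈ Pu.support
  · -- parentFun u = v
    left
    have hu0 : u ≠ 0 := by
      rintro rfl
      have : Pu = Walk.nil := (Walk.isPath_iff_eq_nil (p := Pu)).mp (thePath_isPath hG 0 0)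
      rw [this] at hv
      simp at hv
      exact huv.ne hv.symm
    set D := Pu.dropUntil v hv with hD
    have hDpath : D.IsPath := (thePath_isPath hG u 0).dropUntil hv
    have huD : u ∉ D.support := by
      intro huD
      have hspec := Pu.take_spec hv
      have hnodup : Pu.support.Nodup := (thePath_isPath hG u 0).support_nodup
      rw [← hspec, Walk.support_append, List.nodup_append] at hnodup
      have huT : u ∈ (Pu.takeUntil v hv).support := Walk.start_mem_support _
      rcases (Walk.support_eq_cons D) ▸ huD with h | h
      · exact huv.ne (by simpa using h)
      · exact hnodup.2.2 u huT u (by have h' := huD; rw [Walk.support_eq_cons D] at h'; exact List.mem_of_ne_of_mem huv.ne h') rfl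
    have : thePath hG u 0 = Walk.cons huv D :=
      thePath_unique hG _ (hDpath.cons huD)
    rw [parentFun, dif_neg hu0, this]
    rw [Walk.getVert_cons _ _ (by norm_num)]
    exact Walk.getVert_zero _
  · -- parentFun v = u
    right
    have hv0 : v ≠ 0 := by
      rintro rfl
      exact hv (Walk.end_mem_support Pu)
    have : thePath hG v 0 = Walk.cons huv.symm Pu :=
      thePath_unique hG _ ((thePath_isPath hG u 0).cons hv)
    rw [parentFun, dif_neg hv0, this]
    rw [Walk.getVert_cons _ _ (by norm_num)]
    exact Walk.getVert_zero _

lemma graphOf_parentFun {G : SimpleGraph (Fin n)} (hG : G.IsTree) :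
    graphOf (parentFun hG) = G := by
  ext u v
  rw [graphOf_adj]
  constructor
  · rintro ⟨hne, h | h⟩
    · have hu0 : u ≠ 0 := by rintro rfl; rw [parentFun_root] at h; simp_all
      exact h ▸ adj_parentFun hG hu0
    · have hv0 : v ≠ 0 := by rintro rfl; rw [parentFun_root] at h; simp_all
      exact (h ▸ adj_parentFun hG hv0).symm
  · intro h
    exact ⟨h.ne, parent_or_parent hG h⟩

/-- Part A: rooted parent functions are in bijection with trees. -/
noncomputable def treeEquiv :
    {f : Fin n → Fin n // IsRooted f 0} ≃ {G : SimpleGraph (Fin n) // G.IsTree} where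
  toFun f := ⟨graphOf f.1, isTree_graphOf f.2⟩
  invFun G := ⟨parentFun G.2, parentFun_isRooted G.2⟩
  left_inv := by
    rintro ⟨f, hf⟩
    exact Subtype.ext (parentFun_graphOf hf)
  right_inv := by
    rintro ⟨G, hG⟩
    exact Subtype.ext (graphOf_parentFun hG)

/-! ### Part B: Joyal's bijection -/

open Function

/-- The set of periodic points of `f`. -/
noncomputable def perSet (f : Fin n → Fin n) : Finset (Fin n) :=
  @Finset.filter _ (fun x => ∃ p, 0 < p ∧ f^[p] x = x) (Classical.decPred _) Finset.univ

lemma mem_perSet {f : Fin n → Fin n} {x : Fin n} :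
    x ∈ perSet f ↔ ∃ p, 0 < p ∧ f^[p] x = x := by
  simp [perSet, Finset.mem_filter]

/-- Some iterate of every point is periodic. -/
lemma exists_iterate_mem_perSet (f : Fin n → Fin n) (x : Fin n) :
    ∃ i, f^[i] x ∈ perSet f := by
  obtain ⟨i, j, hne, hij⟩ := Fintype.exists_ne_map_eq_of_card_lt
    (fun i : Fin (n+1) => f^[(i : ℕ)] x) (by simp)
  rcases hne.lt_or_gt with h | h
  · refine ⟨i, mem_perSet.mpr ⟨j - i, by omega, ?_⟩⟩
    rw [← Function.iterate_add_apply, Nat.sub_add_cancel h.le, ← hij]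
  · refine ⟨j, mem_perSet.mpr ⟨i - j, by omega, ?_⟩⟩
    rw [← Function.iterate_add_apply, Nat.sub_add_cancel h.le, hij]

lemma perSet_nonempty (f : Fin n → Fin n) : (perSet f).Nonempty := by
  obtain ⟨i, hi⟩ := exists_iterate_mem_perSet f 0
  exact ⟨_, hi⟩

lemma apply_mem_perSet {f : Fin n → Fin n} {x : Fin n} (hx : x ∈ perSet f) :
    f x ∈ perSet f := by
  obtain ⟨p, hp, hpx⟩ := mem_perSet.mp hx
  refine mem_perSet.mpr ⟨p, hp, ?_⟩
  rw [← Function.iterate_succ_apply, Function.iterate_succ_apply', hpx]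

lemma perSet_injOn {f : Fin n → Fin n} {x y : Fin n} (hx : x ∈ perSet f)
    (hy : y ∈ perSet f) (hxy : f x = f y) : x = y := by
  obtain ⟨p, hp, hpx⟩ := mem_perSet.mp hx
  obtain ⟨q, hq, hqy⟩ := mem_perSet.mp hy
  have hx' : f^[p*q] x = x := by rw [Function.iterate_mul]; exact Function.iterate_fixed hpx q
  have hy' : f^[p*q] y = y := by
    rw [mul_comm, Function.iterate_mul]; exact Function.iterate_fixed hqy p
  have hpq : 0 < p * q := Nat.mul_pos hp hq
  obtain ⟨m, hm⟩ : ∃ m, p * q = m + 1 := ⟨p * q - 1, by omega⟩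
  calc x = f^[p*q] x := hx'.symm
    _ = f^[m] (f x) := by rw [hm, Function.iterate_succ_apply]
    _ = f^[m] (f y) := by rw [hxy]
    _ = f^[p*q] y := by rw [hm, Function.iterate_succ_apply]
    _ = y := hy'

/-- If `f` is injective on an `f`-invariant set containing the iterates, we can peel. -/
lemma iterate_cancel_of_injOn {f : Fin n → Fin n} {S : Finset (Fin n)}
    (hinv : ∀ x ∈ S, f x ∈ S)
    (hinj : ∀ x ∈ S, ∀ y ∈ S, f x = f y → x = y) {v : Fin n} (hv : v ∈ S) :
    ∀ i j : ℕ, i ≤ j → f^[i] v = f^[j] v → f^[j - i] v = v := by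
  intro i
  induction i with
  | zero => intro j _ h; simpa using h.symm
  | succ i ih =>
    intro j hij h
    obtain ⟨j', rfl⟩ : ∃ j', j = j' + 1 := ⟨j - 1, by omega⟩
    have hmem : ∀ k : ℕ, f^[k] v ∈ S := by
      intro k; induction k with
      | zero => simpa using hv
      | succ k ihk => rw [Function.iterate_succ_apply']; exact hinv _ ihk
    have h' : f^[i] v = f^[j'] v := by
      apply hinj _ (hmem i) _ (hmem j')
      rw [← Function.iterate_succ_apply' f i v, ← Function.iterate_succ_apply' f j' v]
      exact h
    have := ih j' (by omega) h'
    simpa [Nat.succ_sub_succ] using this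

/-- Points whose orbit stays outside `perSet`-like invariant set: if `g` agrees with `f`
off `S` then iterates agree as long as they stay off `S`. -/
lemma iterate_congr_off {f g : Fin n → Fin n} {S : Finset (Fin n)}
    (hfg : ∀ v, v ∉ S → g v = f v) {v : Fin n} :
    ∀ i : ℕ, (∀ j, j < i → f^[j] v ∉ S) → g^[i] v = f^[i] v := by
  intro i
  induction i with
  | zero => simp
  | succ i ih =>
    intro h
    rw [Function.iterate_succ_apply', Function.iterate_succ_apply',
      ih (fun j hj => h j (by omega)), hfg _ (h i (by omega))]

lemma nodup_indexOf_get {α : Type*} [DecidableEq α] {l : List α} (h : l.Nodup) {i : ℕ}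
    (hi : i < l.length) : l.idxOf (l.get ⟨i, hi⟩) = i := by
  have hmem : l.get ⟨i, hi⟩ ∈ l := l.get_mem _
  have h1 : l.idxOf (l.get ⟨i, hi⟩) < l.length := List.idxOf_lt_length_iff.2 hmem
  have h2 : l.get ⟨l.idxOf (l.get ⟨i, hi⟩), h1⟩ = l.get ⟨i, hi⟩ := List.idxOf_get h1
  have := (List.Nodup.get_inj_iff h).mp h2
  exact congrArg Fin.val this

/-- The sorted list of periodic points. -/
noncomputable def jL (f : Fin n → Fin n) : List (Fin n) := (perSet f).sort (· ≤ ·)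

/-- The Joyal path: image of the sorted periodic points. -/
noncomputable def jP (f : Fin n → Fin n) : List (Fin n) := (jL f).map f

lemma jL_nodup (f : Fin n → Fin n) : (jL f).Nodup := Finset.sort_nodup _ _

lemma mem_jL {f : Fin n → Fin n} {x : Fin n} : x ∈ jL f ↔ x ∈ perSet f := Finset.mem_sort _

lemma jP_length (f : Fin n → Fin n) : (jP f).length = (perSet f).card := by
  rw [jP, List.length_map, jL, Finset.length_sort]

lemma jL_length (f : Fin n → Fin n) : (jL f).length = (perSet f).card := Finset.length_sort _

lemma jP_nodup (f : Fin n → Fin n) : (jP f).Nodup := by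
  refine List.Nodup.map_on ?_ (jL_nodup f)
  intro x hx y hy hxy
  exact perSet_injOn (mem_jL.mp hx) (mem_jL.mp hy) hxy

lemma jP_toFinset (f : Fin n → Fin n) : (jP f).toFinset = perSet f := by
  apply Finset.eq_of_subset_of_card_le
  · intro x hx
    rw [List.mem_toFinset, jP, List.mem_map] at hx
    obtain ⟨y, hy, rfl⟩ := hx
    exact apply_mem_perSet (mem_jL.mp hy)
  · rw [List.toFinset_card_of_nodup (jP_nodup f), jP_length]

lemma mem_jP {f : Fin n → Fin n} {x : Fin n} : x ∈ jP f ↔ x ∈ perSet f := by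
  rw [← jP_toFinset f, List.mem_toFinset]

lemma jP_length_pos (f : Fin n → Fin n) : 0 < (jP f).length := by
  rw [jP_length]
  exact Finset.card_pos.mpr (perSet_nonempty f)

/-- First endpoint of the Joyal path. -/
noncomputable def jA (f : Fin n → Fin n) : Fin n := (jP f).getD 0 0

/-- Last endpoint of the Joyal path. -/
noncomputable def jB (f : Fin n → Fin n) : Fin n := (jP f).getD ((jP f).length - 1) 0

/-- The Joyal rooted function obtained from `f`. -/
noncomputable def jG (f : Fin n → Fin n) : Fin n → Fin n := fun v =>
  if v ∈ perSet f then (jP f).getD ((jP f).idxOf v + 1) v else f v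

lemma jG_get {f : Fin n → Fin n} {i : ℕ} (hi : i + 1 < (jP f).length) :
    jG f ((jP f).get ⟨i, by omega⟩) = (jP f).get ⟨i + 1, hi⟩ := by
  have hmem : (jP f).get ⟨i, by omega⟩ ∈ perSet f := mem_jP.mp ((jP f).get_mem _)
  rw [jG, if_pos hmem, nodup_indexOf_get (jP_nodup f), List.getD_eq_getElem _ _ hi]
  simp [List.get_eq_getElem]

lemma jG_last {f : Fin n → Fin n} :
    jG f ((jP f).get ⟨(jP f).length - 1, by have := jP_length_pos f; omega⟩)
      = (jP f).get ⟨(jP f).length - 1, by have := jP_length_pos f; omega⟩ := by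
  have hmem : (jP f).get ⟨(jP f).length - 1, by have := jP_length_pos f; omega⟩ ∈ perSet f :=
    mem_jP.mp ((jP f).get_mem _)
  rw [jG, if_pos hmem, nodup_indexOf_get (jP_nodup f)]
  apply List.getD_eq_default
  have := jP_length_pos f
  omega

lemma jB_eq_get (f : Fin n → Fin n) :
    jB f = (jP f).get ⟨(jP f).length - 1, by have := jP_length_pos f; omega⟩ := by
  rw [jB, List.getD_eq_getElem _ _ (by have := jP_length_pos f; omega)]
  simp [List.get_eq_getElem]

lemma jA_eq_get (f : Fin n → Fin n) :
    jA f = (jP f).get ⟨0, jP_length_pos f⟩ := by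
  rw [jA, List.getD_eq_getElem _ _ (jP_length_pos f)]
  simp [List.get_eq_getElem]

lemma jG_root (f : Fin n → Fin n) : jG f (jB f) = jB f := by
  rw [jB_eq_get]; exact jG_last

lemma jG_off {f : Fin n → Fin n} {v : Fin n} (hv : v ∉ perSet f) : jG f v = f v :=
  if_neg hv

lemma jG_iterate_get {f : Fin n → Fin n} :
    ∀ (d i : ℕ) (hi : i + d = (jP f).length - 1),
      (jG f)^[d] ((jP f).get ⟨i, by have := jP_length_pos f; omega⟩) = jB f := by
  intro d
  induction d with
  | zero =>
    intro i hi
    have hieq : i = (jP f).length - 1 := by omega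
    subst hieq
    rw [Function.iterate_zero_apply, jB_eq_get]
  | succ d ih =>
    intro i hi
    rw [Function.iterate_succ_apply, jG_get (by omega)]
    exact ih (i+1) (by omega)

lemma jG_converges_of_mem {f : Fin n → Fin n} {v : Fin n} (hv : v ∈ perSet f) :
    ∃ k, (jG f)^[k] v = jB f := by
  have hvP : v ∈ jP f := mem_jP.mpr hv
  obtain ⟨⟨i, hi⟩, hget⟩ := List.get_of_mem hvP
  refine ⟨(jP f).length - 1 - i, ?_⟩
  rw [← hget]
  exact jG_iterate_get _ i (by omega)

lemma jG_isRooted (f : Fin n → Fin n) : IsRooted (jG f) (jB f) := by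
  refine ⟨jG_root f, fun v => ?_⟩
  by_cases hv : v ∈ perSet f
  · exact jG_converges_of_mem hv
  · have hex : ∃ i, f^[i] v ∈ perSet f := exists_iterate_mem_perSet f v
    set i := Nat.find hex with hi
    have hfi : f^[i] v ∈ perSet f := Nat.find_spec hex
    have hlt : ∀ j, j < i → f^[j] v ∉ perSet f := fun j hj => Nat.find_min hex hj
    have hgi : (jG f)^[i] v = f^[i] v :=
      iterate_congr_off (fun w hw => jG_off hw) i hlt
    obtain ⟨k, hk⟩ := jG_converges_of_mem hfi
    exact ⟨k + i, by rw [Function.iterate_add_apply, hgi, hk]⟩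

/-! ### The backward map -/

open scoped Classical in
/-- Time for the `g`-orbit of `a` to hit `b`. -/
noncomputable def hitTime (g : Fin n → Fin n) (a b : Fin n) : ℕ :=
  if h : ∃ k, g^[k] a = b then Nat.find h else 0

/-- The orbit list of `a` up to hitting `b`. -/
noncomputable def jQ (g : Fin n → Fin n) (a b : Fin n) : List (Fin n) :=
  (List.range (hitTime g a b + 1)).map (fun j => g^[j] a)

/-- The sorted list of elements of the orbit list. -/
noncomputable def jL' (g : Fin n → Fin n) (a b : Fin n) : List (Fin n) :=
  ((jQ g a b).toFinset).sort (· ≤ ·)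

/-- The inverse Joyal map. -/
noncomputable def jInv (g : Fin n → Fin n) (a b : Fin n) : Fin n → Fin n := fun v =>
  if v ∈ jQ g a b then (jQ g a b).getD ((jL' g a b).idxOf v) v else g v

section Backward

variable {g : Fin n → Fin n} {a b : Fin n}

lemma hitTime_spec (hg : IsRooted g b) : g^[hitTime g a b] a = b := by
  rw [hitTime]
  rw [dif_pos (hg.2 a)]
  exact Nat.find_spec (hg.2 a)

lemma hitTime_min (hg : IsRooted g b) {j : ℕ} (hj : j < hitTime g a b) : g^[j] a ≠ b := by
  rw [hitTime] at hj
  rw [dif_pos (hg.2 a)] at hj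
  exact Nat.find_min (hg.2 a) hj

lemma hit_inj (hg : IsRooted g b) :
    ∀ i, i ≤ hitTime g a b → ∀ j, j ≤ hitTime g a b → g^[i] a = g^[j] a → i = j := by
  have key : ∀ i j, i < j → j ≤ hitTime g a b → g^[i] a = g^[j] a → False := by
    intro i j hij hj h
    have hx : g^[j - i] (g^[i] a) = g^[i] a := by
      rw [← Function.iterate_add_apply, Nat.sub_add_cancel (by omega)]
      exact h.symm
    have hb' : g^[hitTime g a b - i] (g^[i] a) = b := by
      rw [← Function.iterate_add_apply, Nat.sub_add_cancel (by omega)]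
      exact hitTime_spec hg
    have hne : g^[i] a ≠ b := hitTime_min hg (by omega)
    exact no_return hg.1 hb' hne (by omega) hx
  intro i hi j hj h
  rcases lt_trichotomy i j with hlt | heq | hlt
  · exact absurd (key i j hlt hj h) id
  · exact heq
  · exact absurd (key j i hlt hi h.symm) id

lemma jQ_length : (jQ g a b).length = hitTime g a b + 1 := by simp [jQ]

lemma jQ_get {j : ℕ} (hj : j < (jQ g a b).length) : (jQ g a b).get ⟨j, hj⟩ = g^[j] a := by
  have hj' : j < (List.range (hitTime g a b + 1)).length := by simpa [jQ] using hj
  simp only [jQ, List.get_eq_getElem, List.getElem_map, List.getElem_range]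

lemma mem_jQ {v : Fin n} : v ∈ jQ g a b ↔ ∃ j, j ≤ hitTime g a b ∧ g^[j] a = v := by
  simp only [jQ, List.mem_map, List.mem_range, Nat.lt_succ_iff]

lemma jQ_nodup (hg : IsRooted g b) : (jQ g a b).Nodup := by
  refine List.Nodup.map_on ?_ List.nodup_range
  intro i hi j hj h
  rw [List.mem_range, Nat.lt_succ_iff] at hi hj
  exact hit_inj hg i hi j hj h

lemma b_mem_jQ (hg : IsRooted g b) : b ∈ jQ g a b :=
  mem_jQ.mpr ⟨hitTime g a b, le_refl _, hitTime_spec hg⟩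

lemma jL'_nodup : (jL' g a b).Nodup := Finset.sort_nodup _ _

lemma mem_jL' {v : Fin n} : v ∈ jL' g a b ↔ v ∈ jQ g a b := by
  rw [jL', Finset.mem_sort, List.mem_toFinset]

lemma jL'_length (hg : IsRooted g b) : (jL' g a b).length = (jQ g a b).length := by
  rw [jL', Finset.length_sort, List.toFinset_card_of_nodup (jQ_nodup hg)]

lemma jInv_get (hg : IsRooted g b) {i : ℕ} (hi : i < (jL' g a b).length) :
    jInv g a b ((jL' g a b).get ⟨i, hi⟩) = (jQ g a b).get ⟨i, by rw [← jL'_length hg]; exact hi⟩ := by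
  have hmem : (jL' g a b).get ⟨i, hi⟩ ∈ jQ g a b := mem_jL'.mp ((jL' g a b).get_mem _)
  rw [jInv, if_pos hmem, nodup_indexOf_get jL'_nodup,
    List.getD_eq_getElem _ _ (by rw [← jL'_length hg]; exact hi)]
  simp [List.get_eq_getElem]

lemma jInv_mem (hg : IsRooted g b) {v : Fin n} (hv : v ∈ jQ g a b) :
    jInv g a b v ∈ jQ g a b := by
  obtain ⟨⟨i, hi⟩, rfl⟩ := List.get_of_mem (mem_jL'.mpr hv)
  rw [jInv_get hg]
  exact (jQ g a b).get_mem _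

lemma jInv_injOn (hg : IsRooted g b) {x y : Fin n} (hx : x ∈ jQ g a b) (hy : y ∈ jQ g a b)
    (h : jInv g a b x = jInv g a b y) : x = y := by
  obtain ⟨⟨i, hi⟩, rfl⟩ := List.get_of_mem (mem_jL'.mpr hx)
  obtain ⟨⟨j, hj⟩, rfl⟩ := List.get_of_mem (mem_jL'.mpr hy)
  rw [jInv_get hg, jInv_get hg] at h
  have := (List.Nodup.get_inj_iff (jQ_nodup hg)).mp h
  have : i = j := congrArg Fin.val this
  subst this
  rfl

lemma jInv_off {v : Fin n} (hv : v ∉ jQ g a b) : jInv g a b v = g v := if_neg hv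

lemma jInv_iterate_mem (hg : IsRooted g b) {v : Fin n} (hv : v ∈ jQ g a b) (k : ℕ) :
    (jInv g a b)^[k] v ∈ jQ g a b := by
  induction k with
  | zero => simpa using hv
  | succ k ih => rw [Function.iterate_succ_apply']; exact jInv_mem hg ih

lemma perSet_jInv (hg : IsRooted g b) : perSet (jInv g a b) = (jQ g a b).toFinset := by
  ext v
  rw [List.mem_toFinset, mem_perSet]
  constructor
  · rintro ⟨p, hp, hpv⟩
    by_contra hv
    by_cases hcase : ∃ i, (jInv g a b)^[i] v ∈ jQ g a b
    · set i := Nat.find hcase with hidef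
      have hfi : (jInv g a b)^[i] v ∈ jQ g a b := Nat.find_spec hcase
      have hfix : (jInv g a b)^[p * i] v = v := by
        rw [Function.iterate_mul]; exact Function.iterate_fixed hpv i
      have hge : i ≤ p * i := Nat.le_mul_of_pos_left i hp
      obtain ⟨m, hm⟩ := Nat.exists_eq_add_of_le hge
      have hmem2 : (jInv g a b)^[p * i] v ∈ jQ g a b := by
        rw [hm, Nat.add_comm, Function.iterate_add_apply]
        exact jInv_iterate_mem hg hfi m
      rw [hfix] at hmem2
      exact hv hmem2
    · push_neg at hcase
      have hiter : ∀ k, (jInv g a b)^[k] v = g^[k] v := by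
        intro k
        induction k with
        | zero => simp
        | succ k ih =>
          rw [Function.iterate_succ_apply', Function.iterate_succ_apply', ← ih,
            jInv_off (hcase k)]
      obtain ⟨k, hk⟩ := hg.2 v
      exact hcase k (by rw [hiter k, hk]; exact b_mem_jQ hg)
  · intro hv
    obtain ⟨i, j, hne, hij⟩ := Fintype.exists_ne_map_eq_of_card_lt
      (fun i : Fin (n+1) => (jInv g a b)^[(i : ℕ)] v) (by simp)
    have hcancel := iterate_cancel_of_injOn (f := jInv g a b) (S := (jQ g a b).toFinset)
      (fun x hx => by rw [List.mem_toFinset] at *; exact jInv_mem hg hx)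
      (fun x hx y hy h => jInv_injOn hg (List.mem_toFinset.mp hx) (List.mem_toFinset.mp hy) h)
      (List.mem_toFinset.mpr hv)
    rcases hne.lt_or_gt with h | h
    · exact ⟨j - i, by omega, hcancel i j (by omega) hij⟩
    · exact ⟨i - j, by omega, hcancel j i (by omega) hij.symm⟩


lemma jL_jInv (hg : IsRooted g b) : jL (jInv g a b) = jL' g a b := by
  rw [jL, perSet_jInv hg, jL']

lemma jP_jInv (hg : IsRooted g b) : jP (jInv g a b) = jQ g a b := by
  rw [jP, jL_jInv hg]
  apply List.ext_get
  · rw [List.length_map, jL'_length hg]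
  · intro i h1 h2
    have hi : i < (jL' g a b).length := by simpa using h1
    have := jInv_get hg hi
    simp only [List.get_eq_getElem] at this ⊢
    rw [List.getElem_map]
    exact this

lemma jA_jInv (hg : IsRooted g b) : jA (jInv g a b) = a := by
  have h0 : 0 < (jQ g a b).length := by rw [jQ_length]; omega
  have := jQ_get (g := g) (a := a) (b := b) (j := 0) h0
  rw [jA, jP_jInv hg, List.getD_eq_getElem _ _ h0]
  simp only [List.get_eq_getElem] at this
  rw [this]
  simp

lemma jB_jInv (hg : IsRooted g b) : jB (jInv g a b) = b := by
  have h0 : (jQ g a b).length - 1 < (jQ g a b).length := by rw [jQ_length]; omega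
  have := jQ_get (g := g) (a := a) (b := b) (j := (jQ g a b).length - 1) h0
  rw [jB, jP_jInv hg, List.getD_eq_getElem _ _ h0]
  simp only [List.get_eq_getElem] at this
  rw [this, jQ_length, Nat.add_sub_cancel]
  exact hitTime_spec hg

lemma jG_jInv (hg : IsRooted g b) : jG (jInv g a b) = g := by
  funext v
  simp only [jG, perSet_jInv hg, jP_jInv hg]
  by_cases hv : v ∈ jQ g a b
  · rw [if_pos (List.mem_toFinset.mpr hv)]
    obtain ⟨⟨j, hj⟩, rfl⟩ := List.get_of_mem hv
    rw [nodup_indexOf_get (jQ_nodup hg)]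
    by_cases hjk : j + 1 < (jQ g a b).length
    · rw [List.getD_eq_getElem _ _ hjk]
      have h1 := jQ_get (g := g) (a := a) (b := b) (j := j+1) hjk
      have h2 := jQ_get (g := g) (a := a) (b := b) (j := j) hj
      simp only [List.get_eq_getElem] at h1 h2 ⊢
      rw [h1, h2, Function.iterate_succ_apply']
    · rw [List.getD_eq_default _ _ (by omega)]
      have hjeq : j = hitTime g a b := by
        have := jQ_length (g := g) (a := a) (b := b); omega
      have h2 := jQ_get (g := g) (a := a) (b := b) (j := j) hj
      have hvb : (jQ g a b).get ⟨j, hj⟩ = b := by rw [h2, hjeq]; exact hitTime_spec hg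
      rw [hvb, hg.1]
  · rw [if_neg (by simpa using hv)]
    exact jInv_off hv

end Backward

lemma jP_get (f : Fin n → Fin n) {i : ℕ} (hi : i < (jP f).length) :
    (jP f).get ⟨i, hi⟩ = f ((jL f).get ⟨i, by simpa [jP] using hi⟩) := by
  simp only [jP, List.get_eq_getElem, List.getElem_map]

lemma jInv_jG (f : Fin n → Fin n) : jInv (jG f) (jA f) (jB f) = f := by
  have hg := jG_isRooted f
  have hm : 0 < (jP f).length := jP_length_pos f
  have horb : ∀ (j : ℕ) (hj : j < (jP f).length),
      (jG f)^[j] (jA f) = (jP f).get ⟨j, hj⟩ := by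
    intro j
    induction j with
    | zero => intro hj; rw [Function.iterate_zero_apply, jA_eq_get]
    | succ j ih =>
      intro hj
      rw [Function.iterate_succ_apply', ih (by omega)]
      exact jG_get hj
  have hht : hitTime (jG f) (jA f) (jB f) = (jP f).length - 1 := by
    apply le_antisymm
    · have hsp : (jG f)^[(jP f).length - 1] (jA f) = jB f := by
        rw [horb _ (by omega), jB_eq_get]
      rw [hitTime]
      rw [dif_pos (hg.2 _)]
      exact Nat.find_le hsp
    · by_contra hlt
      push_neg at hlt
      have hspec := hitTime_spec (a := jA f) hg
      rw [horb _ (by omega)] at hspec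
      have hspec2 := hspec.trans (jB_eq_get f)
      have h2 := (List.Nodup.get_inj_iff (jP_nodup f)).mp hspec2
      have h3 := congrArg Fin.val h2
      simp only at h3
      omega
  have hQ : jQ (jG f) (jA f) (jB f) = jP f := by
    apply List.ext_get
    · rw [jQ_length, hht]; omega
    · intro i h1 h2
      have hq := jQ_get (g := jG f) (a := jA f) (b := jB f) (j := i) h1
      simp only [List.get_eq_getElem] at hq ⊢
      rw [hq, horb i h2]
      simp [List.get_eq_getElem]
  have hL : jL' (jG f) (jA f) (jB f) = jL f := by rw [jL', hQ, jP_toFinset, jL]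
  funext v
  by_cases hv : v ∈ perSet f
  · have hvQ : v ∈ jQ (jG f) (jA f) (jB f) := by rw [hQ]; exact mem_jP.mpr hv
    obtain ⟨⟨i, hi⟩, hvget⟩ := List.get_of_mem (mem_jL'.mpr hvQ)
    have hi' : i < (jL f).length := by rw [← hL]; exact hi
    have hiP : i < (jP f).length := by
      rw [jP, List.length_map]; exact hi'
    rw [← hvget, jInv_get hg]
    have hgq := jQ_get (g := jG f) (a := jA f) (b := jB f) (j := i)
      (by rw [← jL'_length hg]; exact hi)
    rw [hgq, horb i hiP, jP_get f hiP]
    congr 1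
    have := List.get_of_eq hL ⟨i, hi⟩
    simpa using this.symm
  · have hvQ : v ∉ jQ (jG f) (jA f) (jB f) := by
      rw [hQ]; exact fun h => hv (mem_jP.mp h)
    rw [jInv_off hvQ, jG_off hv]

/-! ### Conjugation and the final bijection -/

/-- Conjugation by the transposition `(0 b)`. -/
def conjS (b : Fin n) (g : Fin n → Fin n) : Fin n → Fin n := fun v =>
  Equiv.swap 0 b (g (Equiv.swap 0 b v))

lemma conjS_conjS (b : Fin n) (g : Fin n → Fin n) : conjS b (conjS b g) = g :=
  funext fun v => by simp [conjS, Equiv.swap_apply_self]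

lemma conjS_iterate (b : Fin n) (g : Fin n → Fin n) (k : ℕ) (v : Fin n) :
    (conjS b g)^[k] v = Equiv.swap 0 b (g^[k] (Equiv.swap 0 b v)) := by
  induction k generalizing v with
  | zero => simp [Equiv.swap_apply_self]
  | succ k ih =>
    rw [Function.iterate_succ_apply, ih, conjS, Equiv.swap_apply_self,
      ← Function.iterate_succ_apply]

lemma conjS_isRooted {b r : Fin n} {g : Fin n → Fin n} (hg : IsRooted g r) :
    IsRooted (conjS b g) (Equiv.swap 0 b r) := by
  constructor
  · simp [conjS, Equiv.swap_apply_self, hg.1]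
  · intro v
    obtain ⟨k, hk⟩ := hg.2 (Equiv.swap 0 b v)
    exact ⟨k, by rw [conjS_iterate, hk]⟩

/-- Joyal's bijection. -/
noncomputable def joyal :
    (Fin n → Fin n) ≃ (Fin n × Fin n × {g : Fin n → Fin n // IsRooted g 0}) where
  toFun f := ⟨jB f, jA f, ⟨conjS (jB f) (jG f), by
    have := conjS_isRooted (b := jB f) (jG_isRooted f)
    simpa [Equiv.swap_apply_right] using this⟩⟩
  invFun t := jInv (conjS t.1 t.2.2.1) t.2.1 t.1
  left_inv f := by
    simp only
    rw [conjS_conjS]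
    exact jInv_jG f
  right_inv := by
    rintro ⟨b, a, g0, hg0⟩
    have hg : IsRooted (conjS b g0) b := by
      have := conjS_isRooted (b := b) hg0
      simpa [Equiv.swap_apply_left] using this
    have hB := jB_jInv (g := conjS b g0) (a := a) hg
    have hA := jA_jInv (g := conjS b g0) (a := a) hg
    have hG := jG_jInv (g := conjS b g0) (a := a) hg
    refine Prod.ext hB (Prod.ext hA (Subtype.ext ?_))
    simp only
    rw [hB, hG, conjS_conjS]

end Cayley

/-- Cayley's formula (the case `d = 1` of Kalai's formula): the number of spanning
trees of the complete graph on `n ≥ 2` vertices, i.e. the number of trees on `n`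
labeled vertices, is `n^{n−2}`. -/
theorem cayley_formula (n : ℕ) (hn : 2 ≤ n) :
    Nat.card {G : SimpleGraph (Fin n) // G.IsTree} = n ^ (n - 2) := by
  haveI : NeZero n := ⟨by omega⟩
  have h1 : Nat.card (Fin n → Fin n) = n ^ n := by
    rw [Nat.card_eq_fintype_card, Fintype.card_fun]
    simp
  have h2 := Nat.card_congr (Cayley.joyal (n := n))
  rw [Nat.card_prod, Nat.card_prod, Nat.card_eq_fintype_card (α := Fin n),
    Fintype.card_fin, h1] at h2
  have h3 := Nat.card_congr (Cayley.treeEquiv (n := n))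
  rw [h3] at h2
  set t := Nat.card {G : SimpleGraph (Fin n) // G.IsTree} with ht
  have hpow : n ^ n = n ^ 2 * n ^ (n - 2) := by
    rw [← pow_add]
    congr 1
    omega
  have h4 : n ^ 2 * t = n ^ 2 * n ^ (n - 2) := by
    rw [← hpow, h2]
    ring
  exact (Nat.eq_of_mul_eq_mul_left (by positivity) h4)
end
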